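/- Let α be a Frenet curve in S³ with curvature κ and torsion τ, contained in a geodesic sphere U_{a,σ} for a unit vector a ∈ ℝ⁴ and σ ∈ (−1,1), σ ≠ 0 (so ⟨α(s),a⟩ = σ for all s ∈ I). Assume the torsion is a nonzero constant, τ(s) = τ₀ ≠ 0, and κ′(s) ≠ 0 for all s ∈ I. Then there exists a₀ ∈ ℝ such that for all s ∈ I: sin(τ₀ s + a₀) > 0 and κ(s)·sin(τ₀ s + a₀) = |σ|/√(1−σ²), i.e. κ(s) = |H|/sin(τ₀ s + a₀) where H = σ/√(1−σ²) is the mean curvature of U_{a,σ}. -/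

import Mathlib

noncomputable section

/-- The standard Euclidean inner product on `ℝ⁴`. -/
def eprod (x y : Fin 4 → ℝ) : ℝ :=
  x 0 * y 0 + x 1 * y 1 + x 2 * y 2 + x 3 * y 3

/-- A Frenet curve in the round sphere `S³ = {p ∈ ℝ⁴ : ⟨p,p⟩ = 1}`:
a `C⁴` unit-speed curve `α : I → S³` on an open interval `I`, together with a
Frenet frame `T, N, B`, a positive `C²` curvature `κ` and a `C¹` torsion `τ`,
such that `T(s), N(s), B(s), α(s)` is an orthonormal basis of `ℝ⁴` for each
`s ∈ I` and the Frenet equations `T′ = κN − α`, `N′ = −κT + τB`, `B′ = −τN`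
hold on `I`. -/
structure FrenetCurveS3 where
  I : Set ℝ
  hopen : IsOpen I
  hconn : I.OrdConnected
  α : ℝ → Fin 4 → ℝ
  T : ℝ → Fin 4 → ℝ
  N : ℝ → Fin 4 → ℝ
  B : ℝ → Fin 4 → ℝ
  κ : ℝ → ℝ
  τ : ℝ → ℝ
  hα_smooth : ContDiffOn ℝ 4 α I
  hκ_smooth : ContDiffOn ℝ 2 κ I
  hτ_smooth : ContDiffOn ℝ 1 τ I
  hκ_pos : ∀ s ∈ I, 0 < κ s
  h_sphere : ∀ s ∈ I, eprod (α s) (α s) = 1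
  hT : ∀ s ∈ I, HasDerivAt α (T s) s
  hTT : ∀ s ∈ I, eprod (T s) (T s) = 1
  hNN : ∀ s ∈ I, eprod (N s) (N s) = 1
  hBB : ∀ s ∈ I, eprod (B s) (B s) = 1
  hTN : ∀ s ∈ I, eprod (T s) (N s) = 0
  hTB : ∀ s ∈ I, eprod (T s) (B s) = 0
  hNB : ∀ s ∈ I, eprod (N s) (B s) = 0
  hTα : ∀ s ∈ I, eprod (T s) (α s) = 0
  hNα : ∀ s ∈ I, eprod (N s) (α s) = 0
  hBα : ∀ s ∈ I, eprod (B s) (α s) = 0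
  hbasis : ∀ s ∈ I, ∀ v : Fin 4 → ℝ,
    eprod v v =
      eprod v (T s) ^ 2 + eprod v (N s) ^ 2 + eprod v (B s) ^ 2 + eprod v (α s) ^ 2
  hFrenetT : ∀ s ∈ I, HasDerivAt T (κ s • N s - α s) s
  hFrenetN : ∀ s ∈ I, HasDerivAt N ((-κ s) • T s + τ s • B s) s
  hFrenetB : ∀ s ∈ I, HasDerivAt B ((-τ s) • N s) s

/-- Derivative of `s ↦ eprod (x s) a`. -/
lemma hasDerivAt_eprod_const {x : ℝ → Fin 4 → ℝ} {x' : Fin 4 → ℝ} {s : ℝ}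
    (hx : HasDerivAt x x' s) (a : Fin 4 → ℝ) :
    HasDerivAt (fun t => eprod (x t) a) (eprod x' a) s := by
  have hi : ∀ i, HasDerivAt (fun t => x t i) (x' i) s := hasDerivAt_pi.mp hx
  have := (((hi 0).mul_const (a 0)).add ((hi 1).mul_const (a 1))).add
    (((hi 2).mul_const (a 2)).add ((hi 3).mul_const (a 3)))
  simpa [eprod, add_assoc, Pi.add_def] using this

/-- A function with zero derivative on an open convex set is constant there. -/
lemma const_of_hasDerivAt_zero {f : ℝ → ℝ} {s : Set ℝ} (hs : IsOpen s)
    (hc : Convex ℝ s) (hf : ∀ x ∈ s, HasDerivAt f 0 x) {x y : ℝ}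
    (hx : x ∈ s) (hy : y ∈ s) : f x = f y := by
  refine hc.is_const_of_fderivWithin_eq_zero (fun z hz => ((hf z hz).differentiableAt).differentiableWithinAt) (fun z hz => ?_) hx hy
  rw [fderivWithin_eq_fderiv (hs.uniqueDiffWithinAt hz) (hf z hz).differentiableAt]
  rw [(hf z hz).hasFDerivAt.fderiv]
  ext
  simp

/-- If a Frenet curve `α` in `S³` is contained in a geodesic sphere `U_{a,σ}`
(`a` a unit vector, `σ ∈ (−1,1)`, `σ ≠ 0`), has constant nonzero torsion
`τ ≡ τ₀` and `κ′ ≠ 0` on `I`, then `κ(s) = |H| / sin(τ₀ s + a₀)` for some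
constant `a₀`, where `H = σ/√(1−σ²)` is the mean curvature of `U_{a,σ}`. -/
theorem curvature_of_constant_torsion_curve_in_geodesic_sphere_S3
    (F : FrenetCurveS3) (a : Fin 4 → ℝ) (σ : ℝ)
    (ha : eprod a a = 1) (hσ : σ ∈ Set.Ioo (-1 : ℝ) 1) (hσ0 : σ ≠ 0)
    (hcontained : ∀ s ∈ F.I, eprod (F.α s) a = σ)
    (τ₀ : ℝ) (hτ₀ : τ₀ ≠ 0) (hτ : ∀ s ∈ F.I, F.τ s = τ₀)
    (hκ' : ∀ s ∈ F.I, deriv F.κ s ≠ 0) :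
    ∃ a₀ : ℝ, ∀ s ∈ F.I,
      0 < Real.sin (τ₀ * s + a₀) ∧
      F.κ s * Real.sin (τ₀ * s + a₀) = |σ| / Real.sqrt (1 - σ ^ 2) := by
  rcases Set.eq_empty_or_nonempty F.I with hI | ⟨s₀, hs₀⟩
  · exact ⟨0, fun s hs => absurd (hI ▸ hs) (Set.notMem_empty s)⟩
  set I := F.I
  have hconv : Convex ℝ I := F.hconn.convex
  -- components of a in the frame
  set f : ℝ → ℝ := fun s => eprod (F.T s) a with hf_def
  set g : ℝ → ℝ := fun s => eprod (F.N s) a with hg_def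
  set h : ℝ → ℝ := fun s => eprod (F.B s) a with hh_def
  -- ⟨α, a⟩ is locally constant σ, so f = 0 on I
  have hf0 : ∀ s ∈ I, f s = 0 := by
    intro s hs
    have h1 : HasDerivAt (fun t => eprod (F.α t) a) (f s) s :=
      hasDerivAt_eprod_const (F.hT s hs) a
    have h2 : HasDerivAt (fun t => eprod (F.α t) a) 0 s := by
      have hev : (fun t => eprod (F.α t) a) =ᶠ[nhds s] fun _ => σ := by
        filter_upwards [F.hopen.mem_nhds hs] with t ht using hcontained t ht
      exact (hasDerivAt_const s σ).congr_of_eventuallyEq hev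
    exact h1.unique h2
  -- f' = 0 on I gives κ g = σ
  have hκg : ∀ s ∈ I, F.κ s * g s = σ := by
    intro s hs
    have h1 : HasDerivAt f (eprod (F.κ s • F.N s - F.α s) a) s :=
      hasDerivAt_eprod_const (F.hFrenetT s hs) a
    have h2 : HasDerivAt f 0 s := by
      have hev : f =ᶠ[nhds s] fun _ => 0 := by
        filter_upwards [F.hopen.mem_nhds hs] with t ht using hf0 t ht
      exact (hasDerivAt_const s 0).congr_of_eventuallyEq hev
    have h3 : eprod (F.κ s • F.N s - F.α s) a = 0 := h1.unique h2
    have h4 : eprod (F.κ s • F.N s - F.α s) a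
        = F.κ s * eprod (F.N s) a - eprod (F.α s) a := by
      simp [eprod]; ring
    rw [h4, hcontained s hs] at h3
    have : F.κ s * g s - σ = 0 := h3
    linarith
  -- derivatives of g, h
  have hg' : ∀ s ∈ I, HasDerivAt g (τ₀ * h s) s := by
    intro s hs
    have h1 : HasDerivAt g (eprod ((-F.κ s) • F.T s + F.τ s • F.B s) a) s :=
      hasDerivAt_eprod_const (F.hFrenetN s hs) a
    have h4 : eprod ((-F.κ s) • F.T s + F.τ s • F.B s) a
        = -F.κ s * eprod (F.T s) a + F.τ s * eprod (F.B s) a := by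
      simp [eprod]; ring
    rw [h4, hτ s hs] at h1
    have : -F.κ s * eprod (F.T s) a + τ₀ * eprod (F.B s) a = τ₀ * h s := by
      have := hf0 s hs
      simp only [hf_def] at this
      rw [this]; ring
    rwa [this] at h1
  have hh' : ∀ s ∈ I, HasDerivAt h (-(τ₀ * g s)) s := by
    intro s hs
    have h1 : HasDerivAt h (eprod ((-F.τ s) • F.N s) a) s :=
      hasDerivAt_eprod_const (F.hFrenetB s hs) a
    have h4 : eprod ((-F.τ s) • F.N s) a = -(F.τ s * eprod (F.N s) a) := by
      simp [eprod]; ring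
    rw [h4, hτ s hs] at h1
    exact h1
  -- g² + h² = 1 - σ²
  have hgh : ∀ s ∈ I, g s ^ 2 + h s ^ 2 = 1 - σ ^ 2 := by
    intro s hs
    have hb := F.hbasis s hs a
    have hsymm : ∀ v : Fin 4 → ℝ, eprod a v = eprod v a := by
      intro v; simp [eprod]; ring
    rw [ha, hsymm, hsymm, hsymm, hsymm] at hb
    have hfs : eprod (F.T s) a = 0 := hf0 s hs
    have hαa := hcontained s hs
    rw [hfs, hαa] at hb
    show eprod (F.N s) a ^ 2 + eprod (F.B s) a ^ 2 = 1 - σ ^ 2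
    nlinarith [hb]
  -- the two conserved quantities
  set c1 : ℝ → ℝ := fun s => g s * Real.cos (τ₀ * s) - h s * Real.sin (τ₀ * s) with hc1_def
  set c2 : ℝ → ℝ := fun s => g s * Real.sin (τ₀ * s) + h s * Real.cos (τ₀ * s) with hc2_def
  have hcos : ∀ s : ℝ, HasDerivAt (fun t => Real.cos (τ₀ * t)) (-(τ₀ * Real.sin (τ₀ * s))) s := by
    intro s
    have := (Real.hasDerivAt_cos (τ₀ * s)).comp s ((hasDerivAt_id s).const_mul τ₀)
    simpa [mul_comm, Function.comp_def] using this
  have hsin : ∀ s : ℝ, HasDerivAt (fun t => Real.sin (τ₀ * t)) (τ₀ * Real.cos (τ₀ * s)) s := by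
    intro s
    have := (Real.hasDerivAt_sin (τ₀ * s)).comp s ((hasDerivAt_id s).const_mul τ₀)
    simpa [mul_comm, Function.comp_def] using this
  have hc1' : ∀ s ∈ I, HasDerivAt c1 0 s := by
    intro s hs
    have := ((hg' s hs).mul (hcos s)).sub ((hh' s hs).mul (hsin s))
    have heq : τ₀ * h s * Real.cos (τ₀ * s) + g s * -(τ₀ * Real.sin (τ₀ * s)) -
        (-(τ₀ * g s) * Real.sin (τ₀ * s) + h s * (τ₀ * Real.cos (τ₀ * s))) = 0 := by ring
    rwa [heq] at this
  have hc2' : ∀ s ∈ I, HasDerivAt c2 0 s := by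
    intro s hs
    have := ((hg' s hs).mul (hsin s)).add ((hh' s hs).mul (hcos s))
    have heq : τ₀ * h s * Real.sin (τ₀ * s) + g s * (τ₀ * Real.cos (τ₀ * s)) +
        (-(τ₀ * g s) * Real.cos (τ₀ * s) + h s * -(τ₀ * Real.sin (τ₀ * s))) = 0 := by ring
    rwa [heq] at this
  have hc1const : ∀ s ∈ I, c1 s = c1 s₀ :=
    fun s hs => const_of_hasDerivAt_zero F.hopen hconv hc1' hs hs₀
  have hc2const : ∀ s ∈ I, c2 s = c2 s₀ :=
    fun s hs => const_of_hasDerivAt_zero F.hopen hconv hc2' hs hs₀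
  -- reconstruct g from c1, c2
  have hg_formula : ∀ s ∈ I, g s = c1 s₀ * Real.cos (τ₀ * s) + c2 s₀ * Real.sin (τ₀ * s) := by
    intro s hs
    rw [← hc1const s hs, ← hc2const s hs]
    simp only [hc1_def, hc2_def]
    linear_combination (-(g s)) * Real.sin_sq_add_cos_sq (τ₀ * s)
  -- sign of σ
  set ε : ℝ := if 0 < σ then 1 else -1 with hε_def
  have hεσ : ε * σ = |σ| := by
    rcases lt_or_gt_of_ne hσ0 with hneg | hpos
    · rw [abs_of_neg hneg]; simp [hε_def, not_lt.mpr hneg.le, asymm hneg]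
    · rw [abs_of_pos hpos]; simp [hε_def, hpos]
  have hε2 : ε ^ 2 = 1 := by rcases le_or_gt σ 0 with h | h <;> simp [hε_def, not_lt.mpr, h] <;> split <;> norm_num
  -- amplitude
  have h1σ : (0:ℝ) < 1 - σ ^ 2 := by nlinarith [hσ.1, hσ.2]
  set r : ℝ := Real.sqrt (1 - σ ^ 2) with hr_def
  have hr_pos : 0 < r := Real.sqrt_pos.mpr h1σ
  have hr_sq : r ^ 2 = 1 - σ ^ 2 := Real.sq_sqrt h1σ.le
  have hc12 : (ε * c1 s₀) ^ 2 + (ε * c2 s₀) ^ 2 = r ^ 2 := by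
    have h1 := hgh s₀ hs₀
    have h2 : c1 s₀ ^ 2 + c2 s₀ ^ 2 = g s₀ ^ 2 + h s₀ ^ 2 := by
      simp only [hc1_def, hc2_def]
      nlinarith [Real.sin_sq_add_cos_sq (τ₀ * s₀)]
    rw [hr_sq]
    nlinarith [hε2]
  -- find the phase a₀ via a complex argument
  set z : ℂ := ⟨ε * c2 s₀, ε * c1 s₀⟩ with hz_def
  have hz_abs : ‖z‖ = r := by
    have : ‖z‖ = Real.sqrt ((ε * c2 s₀) ^ 2 + (ε * c1 s₀) ^ 2) := by
      rw [Complex.norm_def, Complex.normSq_mk]; ring_nf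
    rw [this, show (ε * c2 s₀) ^ 2 + (ε * c1 s₀) ^ 2 = r ^ 2 by linarith [hc12],
      Real.sqrt_sq hr_pos.le]
  have hz_ne : z ≠ 0 := by
    intro h0
    rw [h0] at hz_abs
    simp at hz_abs
    exact absurd hz_abs.symm hr_pos.ne'
  refine ⟨Complex.arg z, fun s hs => ?_⟩
  have hcos_arg : Real.cos (Complex.arg z) = (ε * c2 s₀) / r := by
    rw [Complex.cos_arg hz_ne, hz_abs]
  have hsin_arg : Real.sin (Complex.arg z) = (ε * c1 s₀) / r := by
    rw [Complex.sin_arg, hz_abs]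
  -- key identity : r * sin(τ₀ s + arg z) = ε * g s
  have hkey : r * Real.sin (τ₀ * s + Complex.arg z) = ε * g s := by
    rw [Real.sin_add, hcos_arg, hsin_arg, hg_formula s hs]
    field_simp
    ring
  have hκpos := F.hκ_pos s hs
  have hεg : ε * g s = |σ| / F.κ s := by
    have h1 := hκg s hs
    rw [eq_div_iff hκpos.ne', ← hεσ]
    linear_combination ε * h1
  have habs_pos : 0 < |σ| := abs_pos.mpr hσ0
  have hsin_pos : 0 < Real.sin (τ₀ * s + Complex.arg z) := by
    have h1 : 0 < ε * g s := by rw [hεg]; positivity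
    nlinarith [hkey]
  refine ⟨hsin_pos, ?_⟩
  have : F.κ s * (r * Real.sin (τ₀ * s + Complex.arg z)) = F.κ s * (ε * g s) := by rw [hkey]
  rw [hεg, mul_div_cancel₀ _ hκpos.ne'] at this
  rw [eq_div_iff hr_pos.ne']
  linear_combination this
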